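/- arXiv:1709.04809 — 7 statements merged into one kernel-verified Lean document; each statement's English description precedes it below -/
import Mathlib

section
/- Programs P1 and P2 are equivalent with respect to the output value of x: for all integers a, b, x, y, x1, y1, x2, y2, if s11(a,b,x,y,x1,y1) and s21(a,b,x,y,x2,y2) both hold, then x1 = x2. -/
/-- CHC encoding of the loop of program P1. -/
inductive s12 : ℤ → ℤ → ℤ → ℤ → ℤ → ℤ → ℤ → ℤ → Prop
  | base (a b x y : ℤ) (h : a ≥ b) : s12 a b x y a b x y
  | step (a b x y a2 b2 x2 y2 : ℤ) (h : a ≤ b - 1)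
      (ih : s12 (a + 1) b (x + a) (y + x + a) a2 b2 x2 y2) :
      s12 a b x y a2 b2 x2 y2

/-- CHC encoding of the loop of program P2. -/
inductive s23 : ℤ → ℤ → ℤ → ℤ → ℤ → ℤ → ℤ → ℤ → Prop
  | base (a b x y : ℤ) (h : a ≥ b - 1) : s23 a b x y (a + 1) b x (y + x)
  | step (a b x y a2 b2 x2 y2 : ℤ) (h : a ≤ b - 2)
      (ih : s23 (a + 1) b (x + a + 1) (y + x) a2 b2 x2 y2) :
      s23 a b x y a2 b2 x2 y2

/-- CHC encoding of the body of program P2. -/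
def s22 (a b x y a2 b2 x2 y2 : ℤ) : Prop :=
  (a ≥ b ∧ a2 = a ∧ b2 = b ∧ x2 = x ∧ y2 = y) ∨
  (a ≤ b - 1 ∧ s23 a b (x + a) y a2 b2 x2 y2)

/-- Input/output relation of program P1. -/
def s11 (a b x y x2 y2 : ℤ) : Prop := ∃ a2 b2, s12 a b x y a2 b2 x2 y2

/-- Input/output relation of program P2. -/
def s21 (a b x y x2 y2 : ℤ) : Prop := ∃ a2 b2, s22 a b x y a2 b2 x2 y2

/-!
Both programs add `a, a + 1, …, b - 1` to `x`: P1 one term per iteration, P2 the first term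
before its loop and the others inside it. So each output `x` equals the input `x` plus
`∑ i ∈ Finset.Ico a b, i`.
-/

open Finset

theorem Finset.sum_Ico_eq_add_sum_Ico_add_one {α M : Type*} [LinearOrder α] [One α] [Add α]
    [LocallyFiniteOrder α] [SuccAddOrder α] [AddCommMonoid M] {a b : α} (hab : a < b)
    (f : α → M) : ∑ i ∈ Ico a b, f i = f a + ∑ i ∈ Ico (a + 1) b, f i := by
  rw [Ico_add_one_left_eq_Ioo, ← Ioo_insert_left hab, sum_insert left_notMem_Ioo]

theorem s12.x_eq {a b x y a2 b2 x2 y2 : ℤ} (h : s12 a b x y a2 b2 x2 y2) :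
    x2 = x + ∑ i ∈ Ico a b, i := by
  induction h with
  | base a b x y hab => simp [Ico_eq_empty_of_le hab]
  | step a b x y a2 b2 x2 y2 hab _ ih =>
    rw [ih, sum_Ico_eq_add_sum_Ico_add_one (show a < b by omega)]
    ring

theorem s23.x_eq {a b x y a2 b2 x2 y2 : ℤ} (h : s23 a b x y a2 b2 x2 y2) :
    x2 = x + ∑ i ∈ Ico (a + 1) b, i := by
  induction h with
  | base a b x y hab => simp [Ico_eq_empty_of_le (show b ≤ a + 1 by omega)]
  | step a b x y a2 b2 x2 y2 hab _ ih =>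
    rw [ih, sum_Ico_eq_add_sum_Ico_add_one (show a + 1 < b by omega)]
    ring

theorem s22.x_eq {a b x y a2 b2 x2 y2 : ℤ} (h : s22 a b x y a2 b2 x2 y2) :
    x2 = x + ∑ i ∈ Ico a b, i := by
  rcases h with ⟨hab, -, -, rfl, -⟩ | ⟨hab, h⟩
  · simp [Ico_eq_empty_of_le hab]
  · rw [h.x_eq, sum_Ico_eq_add_sum_Ico_add_one (show a < b by omega)]
    ring

/-- Programs P1 and P2 are equivalent with respect to the output value of x. -/
theorem P1_P2_equiv_x (a b x y x1 y1 x2 y2 : ℤ)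
    (h1 : s11 a b x y x1 y1) (h2 : s21 a b x y x2 y2) : x1 = x2 := by
  obtain ⟨_, _, h1⟩ := h1
  obtain ⟨_, _, h2⟩ := h2
  rw [h1.x_eq, h2.x_eq]
end

section
/- Programs P1 and P2 are equivalent with respect to the output value of y: for all integers a, b, x, y, x1, y1, x2, y2, if s11(a,b,x,y,x1,y1) and s21(a,b,x,y,x2,y2) both hold, then y1 = y2. -/
theorem s12.unique {a b x y a2 b2 x2 y2 a3 b3 x3 y3 : ℤ} (h : s12 a b x y a2 b2 x2 y2)
    (h' : s12 a b x y a3 b3 x3 y3) : a2 = a3 ∧ b2 = b3 ∧ x2 = x3 ∧ y2 = y3 := by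
  induction h generalizing a3 b3 x3 y3 with
  | base _ _ _ _ hab =>
    cases h' with
    | base => exact ⟨rfl, rfl, rfl, rfl⟩
    | step _ _ _ _ _ _ _ _ hab' => omega
  | step _ _ _ _ _ _ _ _ hab _ ih =>
    cases h' with
    | base _ _ _ _ hab' => omega
    | step _ _ _ _ _ _ _ _ _ h' => exact ih h'

theorem s23.to_s12 {a b x y a2 b2 x2 y2 : ℤ} (h : s23 a b x y a2 b2 x2 y2) (hab : a < b) :
    s12 a b (x - a) y a2 b2 x2 y2 := by
  induction h with
  | base a b x y hab' =>
    refine s12.step _ _ _ _ _ _ _ _ (by omega) ?_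
    rw [sub_add_cancel, add_assoc, sub_add_cancel]
    exact s12.base _ _ _ _ (by omega)
  | step a b x y _ _ _ _ hab' _ ih =>
    refine s12.step _ _ _ _ _ _ _ _ (by omega) ?_
    have hx : x - a + a = x + a + 1 - (a + 1) := by ring
    have hy : y + (x - a) + a = y + x := by ring
    rw [hx, hy]
    exact ih (by omega)

theorem s22.to_s12 {a b x y a2 b2 x2 y2 : ℤ} (h : s22 a b x y a2 b2 x2 y2) :
    s12 a b x y a2 b2 x2 y2 := by
  rcases h with ⟨hab, rfl, rfl, rfl, rfl⟩ | ⟨hab, h23⟩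
  · exact s12.base _ _ _ _ hab
  · simpa using h23.to_s12 (by omega)

/-- Programs P1 and P2 are equivalent with respect to the output value of y. -/
theorem P1_P2_equiv_y (a b x y x1 y1 x2 y2 : ℤ)
    (h1 : s11 a b x y x1 y1) (h2 : s21 a b x y x2 y2) : y1 = y2 := by
  obtain ⟨_, _, h1⟩ := h1
  obtain ⟨_, _, h2⟩ := h2
  exact (h1.unique h2.to_s12).2.2.2
end

section
/- The paired predicate pp1 introduced by Predicate Pairing with abstraction denotes the empty relation; semantically: for all integers a, b, c, d, e, f, g, h, i, j, k, l, if s12(a,b,c,d,e,f,g,h) and s22(a,b,c,d,i,j,k,l) both hold, then g ≥ k (equivalently, the constraint g ≤ k - 1 together with these two atoms is unsatisfiable). -/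
/-!
P2 runs the same loop as P1 one half-iteration ahead: when P1 is at `(a, x)` with `a < b`, P2 is
at `(a, x + a)`. Induction on the P1 derivation carries this correspondence down to the exit,
where both loops have produced the same final `x`, so in fact `g = k`.
-/

namespace s12

theorem out_x_eq_of_le {a b x y a2 b2 x2 y2 : ℤ} (hba : b ≤ a)
    (H : s12 a b x y a2 b2 x2 y2) : x2 = x := by
  cases H with
  | base => rfl
  | step _ _ _ _ _ _ _ _ hab => omega

theorem out_x_eq_of_s23 {a b x y a2 b2 x2 y2 : ℤ} (H : s12 a b x y a2 b2 x2 y2) (hab : a < b)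
    {y' a3 b3 x3 y3 : ℤ} (H' : s23 a b (x + a) y' a3 b3 x3 y3) : x2 = x3 := by
  induction H generalizing y' with
  | base _ _ _ _ hba => omega
  | step a b x y a2 b2 x2 y2 _ H ih =>
    cases H' with
    | base _ _ _ _ hlast => exact H.out_x_eq_of_le (by omega)
    | step _ _ _ _ _ _ _ _ hnext H' => exact ih (by omega) (by rwa [add_assoc] at H')

end s12

/-- The paired predicate pp1 denotes the empty relation. -/
theorem pp1_empty (a b c d e f g h i j k l : ℤ)
    (h1 : s12 a b c d e f g h) (h2 : s22 a b c d i j k l) : g ≥ k := by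
  rcases h2 with ⟨hba, -, -, rfl, -⟩ | ⟨hab, H2⟩
  · exact (h1.out_x_eq_of_le hba).ge
  · exact (h1.out_x_eq_of_s23 (by omega) H2).ge
end

section
/- Projection for the domain of convex polyhedra (Fourier–Motzkin elimination): for every polyhedron P in ℝ^(n+1), the image of P under the projection π : (Fin (n+1) → ℝ) → (Fin n → ℝ) that forgets the last coordinate (π x = x ∘ Fin.castSucc) is a polyhedron in ℝ^n. -/
/-!
Write a point of `ℝ^(n+1)` as `(y, t)`. Each constraint `∑ a i x i ≤ b` reads
`s(y) + c t ≤ b` with `c` the last coefficient, so it bounds `t` from above when `c > 0`,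
from below when `c < 0`, and does not involve `t` when `c = 0`. Hence `y` lies in the
projection iff the constraints with `c = 0` hold and every lower bound on `t` is at most every
upper bound; clearing the denominators, the latter are again linear inequalities in `y`.
-/

/-- A polyhedron in `ℝ^n` is a finite intersection of closed half-spaces
`{x | ∑ i, a j i * x i ≤ b j}` (the empty intersection being all of `ℝ^n`). -/
def IsPolyhedron {n : ℕ} (P : Set (Fin n → ℝ)) : Prop :=
  ∃ (J : Type) (_ : Fintype J) (a : J → Fin n → ℝ) (b : J → ℝ),
    P = ⋂ j : J, {x : Fin n → ℝ | ∑ i, a j i * x i ≤ b j}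

open Finset

theorem exists_between_of_forall_le_of_finite {α ι κ : Type*} [ConditionallyCompleteLattice α]
    [Nonempty α] [Finite ι] [Finite κ] (l : ι → α) (u : κ → α)
    (h : ∀ i k, l i ≤ u k) : ∃ t, (∀ i, l i ≤ t) ∧ ∀ k, t ≤ u k := by
  cases isEmpty_or_nonempty κ with
  | inl _ =>
    obtain ⟨t, ht⟩ := Finite.bddAbove_range l
    exact ⟨t, fun i ↦ ht ⟨i, rfl⟩, isEmptyElim⟩
  | inr _ =>
    exact ⟨⨅ k, u k, fun i ↦ le_ciInf (h i), fun k ↦ ciInf_le (Finite.bddBelow_range u) k⟩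

/-- Fourier–Motzkin elimination of a single real variable `t`. -/
theorem exists_forall_add_mul_le_iff {ι : Type*} [Finite ι] (s c b : ι → ℝ) :
    (∃ t, ∀ j, s j + c j * t ≤ b j) ↔
      (∀ j, c j = 0 → s j ≤ b j) ∧
        ∀ p, 0 < c p → ∀ q, c q < 0 → c p * s q - c q * s p ≤ c p * b q - c q * b p := by
  constructor
  · rintro ⟨t, ht⟩
    refine ⟨fun j hj ↦ by simpa [hj] using ht j, fun p hp q hq ↦ ?_⟩
    nlinarith [mul_le_mul_of_nonneg_left (ht p) (neg_nonneg.2 hq.le),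
      mul_le_mul_of_nonneg_left (ht q) hp.le]
  · rintro ⟨hzero, hcross⟩
    obtain ⟨t, hlower, hupper⟩ := exists_between_of_forall_le_of_finite
      (fun q : {q // c q < 0} ↦ (b q - s q) / c q) (fun p : {p // 0 < c p} ↦ (b p - s p) / c p)
      fun ⟨q, hq⟩ ⟨p, hp⟩ ↦ by
        rw [div_le_iff_of_neg hq, div_mul_eq_mul_div, div_le_iff₀ hp]
        linarith [hcross p hp q hq]
    refine ⟨t, fun j ↦ ?_⟩
    rcases lt_trichotomy (c j) 0 with hj | hj | hj
    · have := hlower ⟨j, hj⟩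
      rw [div_le_iff_of_neg hj] at this
      linarith
    · simpa [hj] using hzero j hj
    · have := hupper ⟨j, hj⟩
      rw [le_div_iff₀ hj] at this
      linarith

theorem isPolyhedron_halfspace {n : ℕ} (a : Fin n → ℝ) (b : ℝ) :
    IsPolyhedron {x : Fin n → ℝ | ∑ i, a i * x i ≤ b} :=
  ⟨Unit, inferInstance, fun _ ↦ a, fun _ ↦ b, (Set.iInter_const _).symm⟩

theorem IsPolyhedron.iInter {n : ℕ} {ι : Type} [Finite ι] {P : ι → Set (Fin n → ℝ)}
    (hP : ∀ k, IsPolyhedron (P k)) : IsPolyhedron (⋂ k, P k) := by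
  choose J hJ a b hP using hP
  have := Fintype.ofFinite ι
  refine ⟨Σ k, J k, inferInstance, fun j ↦ a j.1 j.2, fun j ↦ b j.1 j.2, ?_⟩
  simp only [hP, Set.iInter_sigma]

theorem IsPolyhedron.inter {n : ℕ} {P Q : Set (Fin n → ℝ)} (hP : IsPolyhedron P)
    (hQ : IsPolyhedron Q) : IsPolyhedron (P ∩ Q) := by
  rw [Set.inter_eq_iInter]
  exact .iInter (Bool.forall_bool.2 ⟨hQ, hP⟩)

theorem mem_image_comp_castSucc_iff {α : Type*} {n : ℕ} {P : Set (Fin (n + 1) → α)}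
    {y : Fin n → α} :
    y ∈ (fun x : Fin (n + 1) → α ↦ x ∘ Fin.castSucc) '' P ↔ ∃ t, Fin.snoc y t ∈ P := by
  constructor
  · rintro ⟨x, hx, rfl⟩
    exact ⟨x (Fin.last n), (Fin.snoc_init_self x).symm ▸ hx⟩
  · rintro ⟨t, ht⟩
    exact ⟨_, ht, Fin.init_snoc _ _⟩

/-- Fourier–Motzkin elimination: the image of a polyhedron in `ℝ^(n+1)` under the
projection forgetting the last coordinate is a polyhedron in `ℝ^n`. -/
theorem polyhedron_projection (n : ℕ) (P : Set (Fin (n + 1) → ℝ))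
    (hP : IsPolyhedron P) :
    IsPolyhedron ((fun x : Fin (n + 1) → ℝ => x ∘ Fin.castSucc) '' P) := by
  obtain ⟨J, _, a, b, rfl⟩ := hP
  set c : J → ℝ := fun j ↦ a j (Fin.last n)
  set s : (Fin n → ℝ) → J → ℝ := fun y j ↦ ∑ i, a j i.castSucc * y i
  have hsub (p q : J) (y : Fin n → ℝ) :
      c p * s y q - c q * s y p = ∑ i, (c p * a q i.castSucc - c q * a p i.castSucc) * y i := by
    simp only [s, sub_mul, sum_sub_distrib, mul_assoc, mul_sum]
  have himage :
      (fun x : Fin (n + 1) → ℝ ↦ x ∘ Fin.castSucc) '' ⋂ j, {x | ∑ i, a j i * x i ≤ b j} =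
      (⋂ j : {j // c j = 0}, {y | s y j ≤ b j}) ∩
        ⋂ pq : {p // 0 < c p} × {q // c q < 0},
          {y | c pq.1 * s y pq.2 - c pq.2 * s y pq.1 ≤ c pq.1 * b pq.2 - c pq.2 * b pq.1} := by
    ext y
    simp only [mem_image_comp_castSucc_iff, Set.mem_iInter, Set.mem_ofPred_eq,
      Fin.sum_univ_castSucc, Fin.snoc_castSucc, Fin.snoc_last]
    rw [exists_forall_add_mul_le_iff]
    simp only [Set.mem_inter_iff, Set.mem_iInter, Set.mem_ofPred_eq, Subtype.forall, Prod.forall]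
    rfl
  rw [himage]
  simp only [hsub]
  exact .inter (.iInter fun j ↦ isPolyhedron_halfspace _ _)
    (.iInter fun pq ↦ isPolyhedron_halfspace _ _)
end

section
/- Existence of a best abstraction into the Octagons domain: for every subset S of ℝ^n there exists a least octagon containing S, i.e., an octagon O with S ⊆ O such that for every octagon O' with S ⊆ O' one has O ⊆ O'. -/
/-- An octagonal functional on `ℝ^n`: `x ↦ ε₁ * x i + ε₂ * x j` with
`ε₁, ε₂ ∈ {-1, 0, 1}`. -/
def IsOctagonalFunctional {n : ℕ} (f : (Fin n → ℝ) → ℝ) : Prop :=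
  ∃ (i j : Fin n) (ε₁ ε₂ : ℝ), ε₁ ∈ ({-1, 0, 1} : Set ℝ) ∧ ε₂ ∈ ({-1, 0, 1} : Set ℝ) ∧
    ∀ x, f x = ε₁ * x i + ε₂ * x j

/-- An octagon in `ℝ^n` is a finite intersection of sets `{x | f k x ≤ b k}`
where each `f k` is an octagonal functional. -/
def IsOctagon {n : ℕ} (P : Set (Fin n → ℝ)) : Prop :=
  ∃ (K : Type) (_ : Fintype K) (f : K → (Fin n → ℝ) → ℝ) (b : K → ℝ),
    (∀ k, IsOctagonalFunctional (f k)) ∧ P = ⋂ k : K, {x : Fin n → ℝ | f k x ≤ b k}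

/-!
There are only finitely many octagonal functionals, `octFun n k` for `k` in a finite type.
For nonempty `S`, intersecting the half-spaces `{x | f x ≤ sup_S f}` over those `f` that are
bounded above on `S` gives an octagon containing `S`, and every constraint `f ≤ b` of an
octagon containing `S` has `sup_S f ≤ b`, so this octagon is the least one. The empty set is
an octagon as soon as `n ≥ 1`, and for `n = 0` the only octagon is the whole (one-point) space.
-/

open Set

def octCoeff : Fin 3 → ℝ := ![-1, 0, 1]

lemma octCoeff_mem (e : Fin 3) : octCoeff e ∈ ({-1, 0, 1} : Set ℝ) := by
  fin_cases e <;> simp [octCoeff]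

lemma exists_octCoeff_eq {ε : ℝ} (h : ε ∈ ({-1, 0, 1} : Set ℝ)) : ∃ e, octCoeff e = ε := by
  rcases h with rfl | rfl | rfl
  exacts [⟨0, rfl⟩, ⟨1, rfl⟩, ⟨2, rfl⟩]

def octFun (n : ℕ) (k : Fin n × Fin n × Fin 3 × Fin 3) (x : Fin n → ℝ) : ℝ :=
  octCoeff k.2.2.1 * x k.1 + octCoeff k.2.2.2 * x k.2.1

lemma isOctagonalFunctional_octFun (n : ℕ) (k : Fin n × Fin n × Fin 3 × Fin 3) :
    IsOctagonalFunctional (octFun n k) :=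
  ⟨k.1, k.2.1, _, _, octCoeff_mem _, octCoeff_mem _, fun _ => rfl⟩

lemma IsOctagonalFunctional.exists_octFun_eq {n : ℕ} {f : (Fin n → ℝ) → ℝ}
    (hf : IsOctagonalFunctional f) : ∃ k, octFun n k = f := by
  obtain ⟨i, j, ε₁, ε₂, h₁, h₂, hf⟩ := hf
  obtain ⟨e₁, rfl⟩ := exists_octCoeff_eq h₁
  obtain ⟨e₂, rfl⟩ := exists_octCoeff_eq h₂
  exact ⟨(i, j, e₁, e₂), funext fun x => (hf x).symm⟩

lemma IsOctagon.eq_univ {P : Set (Fin 0 → ℝ)} (hP : IsOctagon P) : P = univ := by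
  obtain ⟨K, _, f, b, hf, rfl⟩ := hP
  have : IsEmpty K := ⟨fun k => (hf k).choose.elim0⟩
  exact iInter_of_empty _

lemma isOctagon_empty {n : ℕ} (i : Fin n) : IsOctagon (∅ : Set (Fin n → ℝ)) := by
  refine ⟨Unit, inferInstance, fun _ x => 0 * x i + 0 * x i, fun _ => -1,
    fun _ => ⟨i, i, 0, 0, by simp, by simp, fun _ => rfl⟩, ?_⟩
  ext
  simp

/-- The least octagon containing `S`, provided `S` is nonempty (for `S = ∅` the junk value
`sSup ∅ = 0` makes it the wrong set). -/
noncomputable def octagonHull {n : ℕ} (S : Set (Fin n → ℝ)) : Set (Fin n → ℝ) :=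
  ⋂ k : {k // BddAbove (octFun n k '' S)}, {x | octFun n k x ≤ sSup (octFun n k '' S)}

section octagonHull

variable {n : ℕ} (S : Set (Fin n → ℝ))

lemma isOctagon_octagonHull : IsOctagon (octagonHull S) :=
  ⟨_, Fintype.ofFinite _, _, _, fun k => isOctagonalFunctional_octFun n (Subtype.val k), rfl⟩

lemma subset_octagonHull : S ⊆ octagonHull S :=
  fun _ hx => mem_iInter.2 fun k => le_csSup k.2 (mem_image_of_mem _ hx)

variable {S}

lemma octagonHull_subset_setOf_octFun_le (hS : S.Nonempty) {k : Fin n × Fin n × Fin 3 × Fin 3}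
    {b : ℝ} (hb : ∀ y ∈ S, octFun n k y ≤ b) : octagonHull S ⊆ {x | octFun n k x ≤ b} := by
  have hbdd : BddAbove (octFun n k '' S) := ⟨b, forall_mem_image.2 hb⟩
  intro x hx
  calc octFun n k x ≤ sSup (octFun n k '' S) := mem_iInter.1 hx ⟨k, hbdd⟩
    _ ≤ b := csSup_le (hS.image _) (forall_mem_image.2 hb)

lemma octagonHull_subset (hS : S.Nonempty) {O : Set (Fin n → ℝ)} (hO : IsOctagon O)
    (hSO : S ⊆ O) : octagonHull S ⊆ O := by
  obtain ⟨K, _, f, b, hf, rfl⟩ := hO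
  refine subset_iInter fun i => ?_
  obtain ⟨k, hk⟩ := (hf i).exists_octFun_eq
  rw [← hk]
  exact octagonHull_subset_setOf_octFun_le hS fun y hy => hk ▸ mem_iInter.1 (hSO hy) i

end octagonHull

/-- Best abstraction into the Octagons domain: every `S ⊆ ℝ^n` has a least
octagon containing it. -/
theorem best_octagon_abstraction (n : ℕ) (S : Set (Fin n → ℝ)) :
    ∃ O : Set (Fin n → ℝ), IsOctagon O ∧ S ⊆ O ∧
      ∀ O' : Set (Fin n → ℝ), IsOctagon O' → S ⊆ O' → O ⊆ O' := by
  rcases S.eq_empty_or_nonempty with rfl | hS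
  · cases n with
    | zero =>
      exact ⟨octagonHull ∅, isOctagon_octagonHull ∅, empty_subset _,
        fun O' hO' _ => hO'.eq_univ ▸ subset_univ _⟩
    | succ n => exact ⟨∅, isOctagon_empty 0, subset_rfl, fun O' _ _ => empty_subset O'⟩
  · exact ⟨octagonHull S, isOctagon_octagonHull S, subset_octagonHull S,
      fun O' hO' hSO' => octagonHull_subset hS hO' hSO'⟩
end

section
/- Existence of a best abstraction into the Bounded Differences domain: for every nonempty subset S of ℝ^n there exists a least bounded-difference set containing S, i.e., a bounded-difference set B with S ⊆ B such that for every bounded-difference set B' with S ⊆ B' one has B ⊆ B'. -/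
/-- A bounded-difference functional on `ℝ^n`: `x ↦ ε₁ * x i + ε₂ * x j` with
`ε₁, ε₂ ∈ {-1, 0, 1}` and `ε₁ ≠ ε₂`. -/
def IsBDFunctional {n : ℕ} (f : (Fin n → ℝ) → ℝ) : Prop :=
  ∃ (i j : Fin n) (ε₁ ε₂ : ℝ), ε₁ ∈ ({-1, 0, 1} : Set ℝ) ∧ ε₂ ∈ ({-1, 0, 1} : Set ℝ) ∧
    ε₁ ≠ ε₂ ∧ ∀ x, f x = ε₁ * x i + ε₂ * x j

/-- A bounded-difference set in `ℝ^n` is a finite intersection of sets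
`{x | f k x ≤ b k}` where each `f k` is a bounded-difference functional. -/
def IsBDS {n : ℕ} (P : Set (Fin n → ℝ)) : Prop :=
  ∃ (K : Type) (_ : Fintype K) (f : K → (Fin n → ℝ) → ℝ) (b : K → ℝ),
    (∀ k, IsBDFunctional (f k)) ∧ P = ⋂ k : K, {x : Fin n → ℝ | f k x ≤ b k}

/-!
There are only finitely many bounded-difference functionals up to their bound: they are indexed
by `(i, j, ε₁, ε₂)`. Intersecting, over those functionals `f` that are bounded above on `S`, the
half-spaces `{f ≤ sup f(S)}` gives a bounded-difference set containing `S`. It is the least one,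
because a constraint `f ≤ b` valid on the nonempty set `S` forces `sup f(S) ≤ b`.
-/

section SupHull

variable {E ι : Type*}

def supHull (F : ι → E → ℝ) (S : Set E) : Set E :=
  ⋂ i : {i // BddAbove (F i '' S)}, {x | F i x ≤ sSup (F i '' S)}

theorem subset_supHull (F : ι → E → ℝ) (S : Set E) : S ⊆ supHull F S :=
  fun _ hx => Set.mem_iInter.2 fun i => le_csSup i.2 ⟨_, hx, rfl⟩

theorem le_of_mem_supHull {F : ι → E → ℝ} {S : Set E} (hS : S.Nonempty) {i : ι} {b : ℝ}
    (hb : ∀ y ∈ S, F i y ≤ b) {x : E} (hx : x ∈ supHull F S) : F i x ≤ b := by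
  have hbdd : BddAbove (F i '' S) := ⟨b, Set.forall_mem_image.2 hb⟩
  calc F i x ≤ sSup (F i '' S) := Set.mem_iInter.1 hx ⟨i, hbdd⟩
    _ ≤ b := csSup_le (hS.image _) (Set.forall_mem_image.2 hb)

end SupHull

noncomputable def bdCoef : Fin 3 → ℝ := ![-1, 0, 1]

theorem bdCoef_mem (m : Fin 3) : bdCoef m ∈ ({-1, 0, 1} : Set ℝ) := by
  fin_cases m <;> simp [bdCoef]

theorem exists_bdCoef_eq {ε : ℝ} (h : ε ∈ ({-1, 0, 1} : Set ℝ)) : ∃ m, bdCoef m = ε := by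
  rcases h with rfl | rfl | rfl
  exacts [⟨0, rfl⟩, ⟨1, rfl⟩, ⟨2, rfl⟩]

/-- `(i, j, m₁, m₂)` indexes the functional `x ↦ ε₁ * x i + ε₂ * x j` with `εₖ = bdCoef mₖ`. -/
def BDIndex (n : ℕ) : Type :=
  {q : Fin n × Fin n × Fin 3 × Fin 3 // bdCoef q.2.2.1 ≠ bdCoef q.2.2.2}

instance (n : ℕ) : Finite (BDIndex n) :=
  Subtype.finite

noncomputable def BDIndex.toFun {n : ℕ} (q : BDIndex n) (x : Fin n → ℝ) : ℝ :=
  bdCoef q.1.2.2.1 * x q.1.1 + bdCoef q.1.2.2.2 * x q.1.2.1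

theorem BDIndex.isBDFunctional {n : ℕ} (q : BDIndex n) : IsBDFunctional q.toFun :=
  ⟨_, _, _, _, bdCoef_mem _, bdCoef_mem _, q.2, fun _ => rfl⟩

theorem IsBDFunctional.exists_toFun_eq {n : ℕ} {f : (Fin n → ℝ) → ℝ} (hf : IsBDFunctional f) :
    ∃ q : BDIndex n, q.toFun = f := by
  obtain ⟨i, j, ε₁, ε₂, hε₁, hε₂, hne, hfx⟩ := hf
  obtain ⟨m₁, rfl⟩ := exists_bdCoef_eq hε₁
  obtain ⟨m₂, rfl⟩ := exists_bdCoef_eq hε₂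
  exact ⟨⟨(i, j, m₁, m₂), hne⟩, funext fun x => (hfx x).symm⟩

theorem isBDS_supHull {n : ℕ} (S : Set (Fin n → ℝ)) : IsBDS (supHull BDIndex.toFun S) :=
  ⟨{q : BDIndex n // BddAbove (q.toFun '' S)}, Fintype.ofFinite _, fun q => q.1.toFun,
    fun q => sSup (q.1.toFun '' S), fun q => q.1.isBDFunctional, rfl⟩

theorem supHull_subset_of_isBDS {n : ℕ} {S B : Set (Fin n → ℝ)} (hS : S.Nonempty)
    (hB : IsBDS B) (hSB : S ⊆ B) : supHull BDIndex.toFun S ⊆ B := by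
  obtain ⟨K, _, f, b, hf, rfl⟩ := hB
  refine fun x hx => Set.mem_iInter.2 fun k => ?_
  obtain ⟨q, hq⟩ := (hf k).exists_toFun_eq
  have hvalid : ∀ y ∈ S, q.toFun y ≤ b k := fun y hy => hq ▸ Set.mem_iInter.1 (hSB hy) k
  exact hq ▸ le_of_mem_supHull hS hvalid hx

/-- Best abstraction into the Bounded Differences domain: every nonempty
`S ⊆ ℝ^n` has a least bounded-difference set containing it. -/
theorem best_bds_abstraction (n : ℕ) (S : Set (Fin n → ℝ)) (hS : S.Nonempty) :
    ∃ B : Set (Fin n → ℝ), IsBDS B ∧ S ⊆ B ∧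
      ∀ B' : Set (Fin n → ℝ), IsBDS B' → S ⊆ B' → B ⊆ B' :=
  ⟨supHull BDIndex.toFun S, isBDS_supHull S, subset_supHull _ S,
    fun _ hB' hSB' => supHull_subset_of_isBDS hS hB' hSB'⟩
end

section
/- Least upper bound in the domain of convex polyhedra (poly-hull): for all polyhedra P and Q in ℝ^n, the topological closure of the convex hull of P ∪ Q is a polyhedron, it contains both P and Q, and it is the least such polyhedron: every polyhedron R with P ⊆ R and Q ⊆ R satisfies closure(convexHull ℝ (P ∪ Q)) ⊆ R. -/
def polyhedron {n : ℕ} {J : Type*} (a : J → Fin n → ℝ) (b : J → ℝ) : Set (Fin n → ℝ) :=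
  {x | ∀ j, a j ⬝ᵥ x ≤ b j}

theorem isPolyhedron_iff {n : ℕ} {P : Set (Fin n → ℝ)} :
    IsPolyhedron P ↔ ∃ (J : Type) (_ : Fintype J) (a : J → Fin n → ℝ) (b : J → ℝ),
      P = polyhedron a b := by
  simp only [IsPolyhedron, polyhedron, Set.iInter_ofPred]
  rfl

theorem isPolyhedron_polyhedron {n : ℕ} {J : Type} [Fintype J] (a : J → Fin n → ℝ)
    (b : J → ℝ) : IsPolyhedron (polyhedron a b) :=
  isPolyhedron_iff.mpr ⟨J, inferInstance, a, b, rfl⟩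

theorem IsPolyhedron.isClosed {n : ℕ} {P : Set (Fin n → ℝ)} (hP : IsPolyhedron P) :
    IsClosed P := by
  obtain ⟨J, _, a, b, rfl⟩ := isPolyhedron_iff.mp hP
  simp only [polyhedron, Set.ofPred_forall]
  exact isClosed_iInter fun j =>
    isClosed_le (continuous_const.dotProduct continuous_id) continuous_const

theorem IsPolyhedron.convex {n : ℕ} {P : Set (Fin n → ℝ)} (hP : IsPolyhedron P) :
    Convex ℝ P := by
  obtain ⟨J, _, a, b, rfl⟩ := isPolyhedron_iff.mp hP
  simp only [polyhedron, Set.ofPred_forall]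
  exact convex_iInter fun j =>
    convex_halfSpace_le ⟨dotProduct_add (a j), fun r x => dotProduct_smul r (a j) x⟩ (b j)

theorem closure_convexHull_union_subset {n : ℕ} {P Q R : Set (Fin n → ℝ)}
    (hR : IsPolyhedron R) (hPR : P ⊆ R) (hQR : Q ⊆ R) : closure (convexHull ℝ (P ∪ Q)) ⊆ R :=
  closure_minimal (convexHull_min (Set.union_subset hPR hQR) hR.convex) hR.isClosed

theorem exists_between_of_finite {α ι κ : Type*} [LinearOrder α] [Nonempty α] [Finite ι]
    [Finite κ] (l : ι → α) (u : κ → α) (h : ∀ i k, l i ≤ u k) :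
    ∃ t, (∀ i, l i ≤ t) ∧ ∀ k, t ≤ u k := by
  cases isEmpty_or_nonempty ι
  · obtain ⟨t, ht⟩ := (Set.finite_range u).bddBelow
    exact ⟨t, isEmptyElim, fun k => ht ⟨k, rfl⟩⟩
  · obtain ⟨i₀, hi₀⟩ := Finite.exists_max l
    exact ⟨l i₀, hi₀, h i₀⟩

/-- Fourier–Motzkin elimination of a single variable. -/
theorem exists_forall_mul_le_iff {𝕜 J : Type*} [Field 𝕜] [LinearOrder 𝕜]
    [IsStrictOrderedRing 𝕜] [Finite J] (c v : J → 𝕜) :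
    (∃ t, ∀ j, c j * t ≤ v j) ↔
      (∀ j, c j = 0 → 0 ≤ v j) ∧ ∀ p q, 0 < c p → c q < 0 → c q * v p ≤ c p * v q := by
  constructor
  · rintro ⟨t, ht⟩
    refine ⟨fun j hj => by simpa [hj] using ht j, fun p q hp hq => ?_⟩
    nlinarith [ht p, ht q]
  · rintro ⟨hzero, hpair⟩
    obtain ⟨t, hlow, hup⟩ := exists_between_of_finite
      (fun q : {q // c q < 0} => v q / c q) (fun p : {p // 0 < c p} => v p / c p)
      fun ⟨q, hq⟩ ⟨p, hp⟩ => by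
        rw [div_le_iff_of_neg hq, div_mul_eq_mul_div, div_le_iff₀ hp]
        linarith [hpair p q hp hq, mul_comm (v p) (c q), mul_comm (v q) (c p)]
    refine ⟨t, fun j => ?_⟩
    rcases lt_trichotomy (c j) 0 with h | h | h
    · simpa [div_le_iff_of_neg h, mul_comm] using hlow ⟨j, h⟩
    · simpa [h] using hzero j h
    · simpa [le_div_iff₀ h, mul_comm] using hup ⟨j, h⟩

theorem dotProduct_fin_cons {α : Type*} [Mul α] [AddCommMonoid α] {m : ℕ}
    (v : Fin (m + 1) → α) (t : α) (y : Fin m → α) :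
    v ⬝ᵥ Fin.cons t y = v 0 * t + Fin.tail v ⬝ᵥ y :=
  Matrix.dotProduct_cons v t y

theorem isPolyhedron_setOf_exists {n : ℕ} (m : ℕ) {J : Type} [Fintype J] (a : J → Fin n → ℝ)
    (e : J → Fin m → ℝ) (b : J → ℝ) :
    IsPolyhedron {x | ∃ y : Fin m → ℝ, ∀ j, a j ⬝ᵥ x + e j ⬝ᵥ y ≤ b j} := by
  induction m generalizing J with
  | zero =>
    convert isPolyhedron_polyhedron a b
    simp [polyhedron]
  | succ m ih =>
    classical
    set c : J → ℝ := fun j => e j 0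
    let J' := {j // c j = 0} ⊕ {pq : J × J // 0 < c pq.1 ∧ c pq.2 < 0}
    let a' : J' → Fin n → ℝ := Sum.elim (fun j => a j)
      fun pq => c pq.1.1 • a pq.1.2 - c pq.1.2 • a pq.1.1
    let e' : J' → Fin m → ℝ := Sum.elim (fun j => Fin.tail (e j))
      fun pq => c pq.1.1 • Fin.tail (e pq.1.2) - c pq.1.2 • Fin.tail (e pq.1.1)
    let b' : J' → ℝ := Sum.elim (fun j => b j)
      fun pq => c pq.1.1 * b pq.1.2 - c pq.1.2 * b pq.1.1
    convert ih a' e' b' using 1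
    ext x
    simp only [Set.mem_ofPred_eq, Fin.exists_fin_succ_pi]
    rw [exists_comm]
    refine exists_congr fun y => ?_
    have hcons : ∀ t j, a j ⬝ᵥ x + e j ⬝ᵥ Fin.cons t y ≤ b j ↔
        c j * t ≤ b j - a j ⬝ᵥ x - Fin.tail (e j) ⬝ᵥ y := fun t j => by
      rw [dotProduct_fin_cons]
      constructor <;> intro <;> linarith
    simp only [hcons, exists_forall_mul_le_iff, J', Sum.forall, Subtype.forall, Prod.forall, a',
      e', b', Sum.elim_inl, Sum.elim_inr, sub_dotProduct, smul_dotProduct, smul_eq_mul, and_imp]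
    refine and_congr (forall₂_congr fun j _ => ?_) (forall₄_congr fun p q _ _ => ?_) <;>
      constructor <;> intro <;> linarith

def liftedHull {n : ℕ} {J K : Type*} (a : J → Fin n → ℝ) (b : J → ℝ) (c : K → Fin n → ℝ)
    (d : K → ℝ) : Set (Fin n → ℝ) :=
  {x | ∃ y : Fin n → ℝ, ∃ t : ℝ, 0 ≤ t ∧ t ≤ 1 ∧ (∀ j, a j ⬝ᵥ y ≤ t * b j) ∧
    ∀ k, c k ⬝ᵥ (x - y) ≤ (1 - t) * d k}

theorem isPolyhedron_liftedHull {n : ℕ} {J K : Type} [Fintype J] [Fintype K]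
    (a : J → Fin n → ℝ) (b : J → ℝ) (c : K → Fin n → ℝ) (d : K → ℝ) :
    IsPolyhedron (liftedHull a b c d) := by
  convert isPolyhedron_setOf_exists (n + 1)
    (Sum.elim (fun _ => 0) (Sum.elim c fun _ => 0) : J ⊕ K ⊕ Fin 2 → Fin n → ℝ)
    (Sum.elim (fun j => Fin.cons (-b j) (a j))
      (Sum.elim (fun k => Fin.cons (d k) (-c k)) ![Fin.cons (-1) 0, Fin.cons 1 0]))
    (Sum.elim (fun _ => 0) (Sum.elim d ![0, 1])) using 1
  ext x
  simp only [liftedHull, Set.mem_ofPred_eq, Fin.exists_fin_succ_pi, Sum.forall, Sum.elim_inl,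
    Sum.elim_inr, Fin.forall_fin_two, dotProduct_fin_cons, Fin.cons_zero, Fin.tail_cons,
    zero_dotProduct, Matrix.cons_val_zero, Matrix.cons_val_one, neg_dotProduct, dotProduct_sub]
  rw [exists_comm]
  refine exists_congr fun y => exists_congr fun t => ⟨?_, ?_⟩
  · rintro ⟨ht0, ht1, hy, hxy⟩
    exact ⟨fun j => by linarith [hy j], fun k => by linarith [hxy k], by linarith, by linarith⟩
  · rintro ⟨hy, hxy, ht0, ht1⟩
    exact ⟨by linarith, by linarith, fun j => by linarith [hy j], fun k => by linarith [hxy k]⟩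

section LiftedHull

variable {n : ℕ} {J K : Type*} {a : J → Fin n → ℝ} {b : J → ℝ} {c : K → Fin n → ℝ}
  {d : K → ℝ}

theorem polyhedron_subset_liftedHull_left : polyhedron a b ⊆ liftedHull a b c d :=
  fun x hx => ⟨x, 1, zero_le_one, le_rfl, fun j => by simpa using hx j, fun k => by simp⟩

theorem polyhedron_subset_liftedHull_right : polyhedron c d ⊆ liftedHull a b c d :=
  fun x hx => ⟨0, 0, le_rfl, zero_le_one, fun j => by simp, fun k => by simpa using hx k⟩

theorem inv_smul_mem_polyhedron {y : Fin n → ℝ} {t : ℝ} (ht : 0 < t)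
    (hy : ∀ j, a j ⬝ᵥ y ≤ t * b j) : t⁻¹ • y ∈ polyhedron a b := fun j => by
  rw [dotProduct_smul, smul_eq_mul, inv_mul_le_iff₀ ht]
  exact hy j

theorem mem_convexHull_union_of_lifted {x y : Fin n → ℝ} {t : ℝ} (ht0 : 0 < t) (ht1 : t < 1)
    (hy : ∀ j, a j ⬝ᵥ y ≤ t * b j) (hxy : ∀ k, c k ⬝ᵥ (x - y) ≤ (1 - t) * d k) :
    x ∈ convexHull ℝ (polyhedron a b ∪ polyhedron c d) := by
  have hp := inv_smul_mem_polyhedron ht0 hy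
  have hq := inv_smul_mem_polyhedron (sub_pos.mpr ht1) hxy
  convert convex_convexHull ℝ _ (subset_convexHull ℝ _ (Set.mem_union_left _ hp))
    (subset_convexHull ℝ _ (Set.mem_union_right _ hq)) ht0.le (sub_pos.mpr ht1).le
    (add_sub_cancel t 1) using 1
  rw [smul_inv_smul₀ ht0.ne', smul_inv_smul₀ (sub_pos.mpr ht1).ne', add_sub_cancel]

theorem openSegment_midpoint_subset_convexHull {x p q : Fin n → ℝ}
    (hx : x ∈ liftedHull a b c d) (hp : p ∈ polyhedron a b) (hq : q ∈ polyhedron c d) :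
    openSegment ℝ x (midpoint ℝ p q) ⊆ convexHull ℝ (polyhedron a b ∪ polyhedron c d) := by
  obtain ⟨y, t, ht0, ht1, hy, hxy⟩ := hx
  rintro _ ⟨θ, η, hθ, hη, hθη, rfl⟩
  obtain rfl : η = 1 - θ := by linarith
  refine mem_convexHull_union_of_lifted (y := θ • y + ((1 - θ) / 2) • p)
    (t := θ * t + (1 - θ) / 2) (by nlinarith) (by nlinarith) (fun j => ?_) (fun k => ?_)
  · rw [dotProduct_add, dotProduct_smul, dotProduct_smul, smul_eq_mul, smul_eq_mul]
    linarith [mul_le_mul_of_nonneg_left (hy j) hθ.le, mul_le_mul_of_nonneg_left (hp j) hη.le]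
  · have hsplit : θ • x + (1 - θ) • midpoint ℝ p q - (θ • y + ((1 - θ) / 2) • p) =
        θ • (x - y) + ((1 - θ) / 2) • q := by
      rw [midpoint_eq_smul_add, invOf_eq_inv]
      module
    rw [hsplit, dotProduct_add, dotProduct_smul, dotProduct_smul, smul_eq_mul, smul_eq_mul]
    linarith [mul_le_mul_of_nonneg_left (hxy k) hθ.le, mul_le_mul_of_nonneg_left (hq k) hη.le]

theorem liftedHull_subset_closure_convexHull {p q : Fin n → ℝ} (hp : p ∈ polyhedron a b)
    (hq : q ∈ polyhedron c d) :
    liftedHull a b c d ⊆ closure (convexHull ℝ (polyhedron a b ∪ polyhedron c d)) :=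
  fun x hx => closure_mono (openSegment_midpoint_subset_convexHull hx hp hq)
    (segment_subset_closure_openSegment (left_mem_segment ℝ x _))

end LiftedHull

/-- Least upper bound in the domain of convex polyhedra (poly-hull): the closure
of the convex hull of `P ∪ Q` is a polyhedron containing both `P` and `Q`, and it
is contained in every polyhedron containing both `P` and `Q`. -/
theorem polyhull_lub (n : ℕ) (P Q : Set (Fin n → ℝ))
    (hP : IsPolyhedron P) (hQ : IsPolyhedron Q) :
    IsPolyhedron (closure (convexHull ℝ (P ∪ Q))) ∧
    P ⊆ closure (convexHull ℝ (P ∪ Q)) ∧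
    Q ⊆ closure (convexHull ℝ (P ∪ Q)) ∧
    ∀ R : Set (Fin n → ℝ), IsPolyhedron R → P ⊆ R → Q ⊆ R →
      closure (convexHull ℝ (P ∪ Q)) ⊆ R := by
  refine ⟨?_, Set.subset_union_left.trans ((subset_convexHull ℝ _).trans subset_closure),
    Set.subset_union_right.trans ((subset_convexHull ℝ _).trans subset_closure),
    fun R hR => closure_convexHull_union_subset hR⟩
  rcases P.eq_empty_or_nonempty with rfl | ⟨p, hp⟩
  · rwa [Set.empty_union, hQ.convex.convexHull_eq, hQ.isClosed.closure_eq]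
  rcases Q.eq_empty_or_nonempty with rfl | ⟨q, hq⟩
  · rwa [Set.union_empty, hP.convex.convexHull_eq, hP.isClosed.closure_eq]
  obtain ⟨J, _, a, b, rfl⟩ := isPolyhedron_iff.mp hP
  obtain ⟨K, _, c, d, rfl⟩ := isPolyhedron_iff.mp hQ
  have hL := isPolyhedron_liftedHull a b c d
  rwa [(closure_convexHull_union_subset hL polyhedron_subset_liftedHull_left
    polyhedron_subset_liftedHull_right).antisymm (liftedHull_subset_closure_convexHull hp hq)]
end
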